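/- Let P ∈ R^{k×p} have columns of unit ℓ2-norm and let Ω_P(w) = ‖P·Diag(w)‖_*. The dual norm Ω_P*(u) = max{uᵀv : Ω_P(v) ≤ 1} satisfies Ω_P*(u) ≤ ‖P·Diag(u)‖_{op} for all u ∈ R^p. -/

import Mathlib

noncomputable def traceNorm {n p : ℕ} (M : Matrix (Fin n) (Fin p) ℝ) : ℝ :=
  ((Matrix.posSemidef_conjTranspose_mul_self M).1.eigenvectorUnitary.1 *
    Matrix.diagonal ((RCLike.ofReal : ℝ → ℝ) ∘ (√·) ∘ (Matrix.posSemidef_conjTranspose_mul_self M).1.eigenvalues) *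
    (star (Matrix.posSemidef_conjTranspose_mul_self M).1.eigenvectorUnitary :
      Matrix (Fin p) (Fin p) ℝ)).trace

noncomputable def opNorm {k p : ℕ} (M : Matrix (Fin k) (Fin p) ℝ) : ℝ :=
  ‖LinearMap.toContinuousLinearMap (Matrix.toEuclideanLin M)‖

/-!
With `A = P * diagonal u` and `B = P * diagonal v`, unit columns of `P` give
`u ⬝ᵥ v = tr (Aᵀ B)`. Expanding this trace in an orthonormal eigenbasis `(eᵢ)` of `Bᵀ B`, each term
`⟪A eᵢ, B eᵢ⟫` is at most `‖A‖_op ‖B eᵢ‖ = ‖A‖_op √λᵢ`, and `∑ √λᵢ` is the trace norm of `B`.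
-/

open Matrix
open scoped InnerProductSpace

theorem Matrix.trace_conjTranspose_mul_eq_sum_inner {𝕜 m n ι : Type*} [RCLike 𝕜] [Fintype m]
    [DecidableEq m] [Fintype n] [DecidableEq n] [Fintype ι] (A B : Matrix m n 𝕜)
    (b : OrthonormalBasis ι 𝕜 (EuclideanSpace 𝕜 n)) :
    (Aᴴ * B).trace = ∑ i, ⟪toEuclideanLin A (b i), toEuclideanLin B (b i)⟫_𝕜 := by
  rw [← trace_toLin_eq _ (EuclideanSpace.basisFun n 𝕜).toBasis,
    ← toEuclideanLin_eq_toLin_orthonormal, toLpLin_mul_same,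
    toEuclideanLin_conjTranspose_eq_adjoint, LinearMap.trace_eq_sum_inner _ b]
  simp [LinearMap.adjoint_inner_right]

theorem Matrix.IsHermitian.norm_toEuclideanLin_eigenvectorBasis {𝕜 m n : Type*} [RCLike 𝕜]
    [Fintype m] [DecidableEq m] [Fintype n] [DecidableEq n] {B : Matrix m n 𝕜}
    (hB : (Bᴴ * B).IsHermitian) (i : n) :
    ‖toEuclideanLin B (hB.eigenvectorBasis i)‖ = √(hB.eigenvalues i) := by
  set x := hB.eigenvectorBasis i
  have hx : toEuclideanLin (Bᴴ * B) x = (hB.eigenvalues i : 𝕜) • x := by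
    rw [toLpLin_apply, hB.mulVec_eigenvectorBasis, RCLike.real_smul_eq_coe_smul (K := 𝕜),
      WithLp.toLp_smul, WithLp.toLp_ofLp]
  have h : ‖toEuclideanLin B x‖ ^ 2 = hB.eigenvalues i :=
    calc ‖toEuclideanLin B x‖ ^ 2
        = RCLike.re ⟪x, toEuclideanLin Bᴴ (toEuclideanLin B x)⟫_𝕜 := by
          rw [@norm_sq_eq_re_inner 𝕜, toEuclideanLin_conjTranspose_eq_adjoint,
            LinearMap.adjoint_inner_right]
      _ = RCLike.re ⟪x, (hB.eigenvalues i : 𝕜) • x⟫_𝕜 := by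
          rw [← hx, toLpLin_mul_same, LinearMap.comp_apply]
      _ = hB.eigenvalues i := by
          rw [inner_smul_right, inner_self_eq_norm_sq_to_K, hB.eigenvectorBasis.orthonormal.1 i]
          simp
  rw [← h, Real.sqrt_sq (norm_nonneg _)]

theorem Matrix.dotProduct_eq_trace_transpose_mul {R m n : Type*} [CommRing R] [Fintype m]
    [Fintype n] [DecidableEq n] (P : Matrix m n R) (hP : ∀ i, ∑ j, P j i ^ 2 = 1)
    (u v : n → R) :
    u ⬝ᵥ v = ((P * diagonal u)ᵀ * (P * diagonal v)).trace := by
  simp only [dotProduct, trace, diag, mul_apply (M := (P * diagonal u)ᵀ), transpose_apply,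
    mul_diagonal]
  refine Finset.sum_congr rfl fun i _ => ?_
  rw [← mul_one (u i * v i), ← hP i, Finset.mul_sum]
  exact Finset.sum_congr rfl fun j _ => by ring

theorem traceNorm_eq_sum_sqrt_eigenvalues {n p : ℕ} (M : Matrix (Fin n) (Fin p) ℝ) :
    traceNorm M = ∑ i, √((posSemidef_conjTranspose_mul_self M).1.eigenvalues i) := by
  rw [traceNorm, trace_mul_cycle, Unitary.coe_star_mul_self, one_mul, trace_diagonal]
  rfl

theorem norm_toEuclideanLin_le_opNorm {k p : ℕ} (A : Matrix (Fin k) (Fin p) ℝ)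
    (x : EuclideanSpace ℝ (Fin p)) : ‖toEuclideanLin A x‖ ≤ opNorm A * ‖x‖ :=
  (LinearMap.toContinuousLinearMap (toEuclideanLin A)).le_opNorm x

theorem trace_transpose_mul_le_opNorm_mul_traceNorm {k p : ℕ} (A B : Matrix (Fin k) (Fin p) ℝ) :
    (Aᵀ * B).trace ≤ opNorm A * traceNorm B := by
  set hB := (posSemidef_conjTranspose_mul_self B).1
  set e := hB.eigenvectorBasis
  rw [← conjTranspose_eq_transpose_of_trivial, trace_conjTranspose_mul_eq_sum_inner A B e,
    traceNorm_eq_sum_sqrt_eigenvalues, Finset.mul_sum]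
  gcongr with i
  calc ⟪toEuclideanLin A (e i), toEuclideanLin B (e i)⟫_ℝ
      ≤ ‖toEuclideanLin A (e i)‖ * ‖toEuclideanLin B (e i)‖ := real_inner_le_norm _ _
    _ ≤ opNorm A * ‖e i‖ * √(hB.eigenvalues i) := by
      rw [hB.norm_toEuclideanLin_eigenvectorBasis]
      gcongr
      exact norm_toEuclideanLin_le_opNorm A (e i)
    _ = opNorm A * √(hB.eigenvalues i) := by rw [e.orthonormal.1 i, mul_one]

theorem dual_norm_le_opNorm {k p : ℕ} (P : Matrix (Fin k) (Fin p) ℝ)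
    (hP : ∀ i : Fin p, ∑ j, P j i ^ 2 = 1) (u : Fin p → ℝ) :
    sSup {x : ℝ | ∃ v : Fin p → ℝ,
        traceNorm (P * Matrix.diagonal v) ≤ 1 ∧ x = ∑ i, u i * v i} ≤
      opNorm (P * Matrix.diagonal u) := by
  refine Real.sSup_le ?_ (norm_nonneg _)
  rintro _ ⟨v, hv, rfl⟩
  calc u ⬝ᵥ v
      = ((P * diagonal u)ᵀ * (P * diagonal v)).trace := dotProduct_eq_trace_transpose_mul P hP u v
    _ ≤ opNorm (P * diagonal u) * traceNorm (P * diagonal v) :=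
      trace_transpose_mul_le_opNorm_mul_traceNorm _ _
    _ ≤ opNorm (P * diagonal u) := mul_le_of_le_one_right (norm_nonneg _) hv
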